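/- arXiv:0904.0043 — 4 statements merged into one kernel-verified Lean document; each statement's English description precedes it below -/
import Mathlib

section
/- Suppose G = ⊔_{i∈I} D t_i U Z is a finite disjoint union of double cosets, with t_i ∈ G and I a finite index set. For each i ∈ I, let W^{(i)} denote the set of w ∈ W such that σ(u)^{-1}ψ(z)·w = w for every u ∈ U and z ∈ Z with uz ∈ t_i^{-1} D t_i. Then the map f ↦ (f(t_i))_{i∈I} is an isomorphism of A-modules from S_{σ,ψ} onto ⊕_{i∈I} W^{(i)}. -/
set_option maxHeartbeats 1000000
set_option synthInstance.maxHeartbeats 400000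

noncomputable section

namespace SerreWeightsAux

section RepBasics

variable {k G V : Type*} [CommRing k] [Group G] [AddCommGroup V] [Module k V]

/-- The restriction of a representation to an invariant submodule. -/
def subRep (ρ : Representation k G V) (N : Submodule k V)
    (h : ∀ g : G, ∀ v ∈ N, ρ g v ∈ N) : Representation k G N where
  toFun g := (ρ g).restrict (h g)
  map_one' := by ext v; simp [LinearMap.restrict_apply]
  map_mul' g₁ g₂ := by ext v; simp [LinearMap.restrict_apply]

/-- The right translation representation on functions on the group. -/
def rtRep (k : Type*) [CommRing k] (G : Type*) [Group G] (M : Type*) [AddCommGroup M]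
    [Module k M] : Representation k G (G → M) where
  toFun g :=
    { toFun := fun f x => f (x * g)
      map_add' := fun _ _ => rfl
      map_smul' := fun _ _ => rfl }
  map_one' := by ext f x; simp
  map_mul' g₁ g₂ := by ext f x; simp [mul_assoc]

end RepBasics

variable {G : Type*} [Group G]

section SModDefs

variable (U Z : Subgroup G)
variable (A : Type*) [CommRing A] (W : Type*) [AddCommGroup W] [Module A W]
variable (σ : Representation A U W) (ψ : Z →* Aˣ)

/-- The compatibility between an action `σ` of `U` and a central character `ψ` of `Z`:
for `u ∈ U ∩ Z`, the automorphism `σ(u)` is multiplication by `ψ(u)⁻¹`. -/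
def CharCompat : Prop :=
  ∀ (u : U) (h : (u : G) ∈ Z),
    σ u = (((ψ ⟨(u : G), h⟩)⁻¹ : Aˣ) : A) • LinearMap.id

variable (D : Subgroup G)

/-- The `A`-module `S_{σ,ψ}` of functions `f : G → W` with `f(γgu) = σ(u)⁻¹ f(g)` and
`f(gz) = ψ(z) f(g)` for `γ ∈ D`, `u ∈ U`, `z ∈ Z`. -/
def SMod : Submodule A (G → W) where
  carrier := {f | ∀ (γ : D) (g : G) (u : U) (z : Z),
    f (↑γ * g * ↑u * ↑z) = (ψ z : A) • σ u⁻¹ (f g)}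
  add_mem' := by
    intro f₁ f₂ h₁ h₂ γ g u z
    simp only [Pi.add_apply, h₁ γ g u z, h₂ γ g u z, map_add, smul_add]
  zero_mem' := by
    intro γ g u z
    simp
  smul_mem' := by
    intro c f hf γ g u z
    simp only [Pi.smul_apply, hf γ g u z, map_smul]
    rw [smul_comm]

lemma mem_SMod_iff {f : G → W} :
    f ∈ SMod U Z A W σ ψ D ↔ ∀ (γ : D) (g : G) (u : U) (z : Z),
      f (↑γ * g * ↑u * ↑z) = (ψ z : A) • σ u⁻¹ (f g) :=
  Iff.rfl

/-- The submodule `W^{(t)}` of vectors fixed (up to the characters) by the elements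
`u z ∈ UZ` lying in `t⁻¹ D t`. -/
def Wfix (t : G) : Submodule A W where
  carrier := {w | ∀ (u : U) (z : Z), t * (↑u * ↑z) * t⁻¹ ∈ D →
    σ u⁻¹ ((ψ z : A) • w) = w}
  add_mem' := by
    intro w₁ w₂ h₁ h₂ u z h
    simp only [smul_add, map_add, h₁ u z h, h₂ u z h]
  zero_mem' := by
    intro u z h
    simp
  smul_mem' := by
    intro c w hw u z h
    rw [smul_comm, map_smul, hw u z h]

/-- Evaluation of elements of `S_{σ,ψ}` at a finite family of points of `G`. -/
def evalMap {I : Type*} (t : I → G) : SMod U Z A W σ ψ D →ₗ[A] (I → W) :=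
  LinearMap.pi fun i => (LinearMap.proj (t i)).comp (SMod U Z A W σ ψ D).subtype

/-- The map `S_{σ₁,ψ} → S_{σ₂,ψ}` induced by a `U`-equivariant map `W₁ → W₂`. -/
def SMap {W₁ W₂ : Type*} [AddCommGroup W₁] [Module A W₁] [AddCommGroup W₂] [Module A W₂]
    (σ₁ : Representation A U W₁) (σ₂ : Representation A U W₂)
    (φ : W₁ →ₗ[A] W₂) (hφ : ∀ (u : U) (w : W₁), φ (σ₁ u w) = σ₂ u (φ w)) :
    SMod U Z A W₁ σ₁ ψ D →ₗ[A] SMod U Z A W₂ σ₂ ψ D where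
  toFun f := ⟨fun g => φ (f.1 g), by
    intro γ g u z
    show φ (f.1 (↑γ * g * ↑u * ↑z)) = _
    rw [f.2 γ g u z, map_smul, hφ]⟩
  map_add' f₁ f₂ := Subtype.ext (funext fun g => map_add φ _ _)
  map_smul' c f := Subtype.ext (funext fun g => map_smul φ c _)

end SModDefs

section IndDefs

variable (U' U : Subgroup G) (hUU : U' ≤ U)
variable (A : Type*) [CommRing A] (W : Type*) [AddCommGroup W] [Module A W]
variable (σ : Representation A U' W)

/-- The module `Ind_{U'}^{U} W` of functions `θ : U → W` with `θ(u'u) = σ(u')θ(u)`. -/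
def IndMod : Submodule A (↥U → W) where
  carrier := {θ | ∀ (u' : U') (u : U), θ (Subgroup.inclusion hUU u' * u) = σ u' (θ u)}
  add_mem' := by
    intro θ₁ θ₂ h₁ h₂ u' u
    simp [h₁ u' u, h₂ u' u]
  zero_mem' := by
    intro u' u
    simp
  smul_mem' := by
    intro c θ hθ u' u
    simp [hθ u' u]

/-- The representation of `U` on `Ind_{U'}^{U} W` by right translation. -/
def indRep : Representation A U (IndMod U' U hUU A W σ) :=
  subRep (rtRep A U W) (IndMod U' U hUU A W σ) (by
    intro g θ hθ u' u
    show θ (Subgroup.inclusion hUU u' * u * g) = _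
    rw [mul_assoc]
    exact hθ u' (u * g))

/-- Evaluation at `1 ∈ U` of functions valued in `Ind_{U'}^{U} W`. -/
def evInd : (G → (IndMod U' U hUU A W σ)) →ₗ[A] (G → W) where
  toFun F := fun x => ((F x : ↥U → W) 1)
  map_add' _ _ := rfl
  map_smul' _ _ := rfl

end IndDefs

/-- If `G = ⊔ᵢ D tᵢ U Z` is a finite disjoint union of double cosets, then
`f ↦ (f(tᵢ))ᵢ` is an isomorphism of `A`-modules from `S_{σ,ψ}` onto `⊕ᵢ W^{(i)}`. -/
theorem stmt9 (G : Type) [Group G] (D U Z : Subgroup G) (hZ : Z ≤ Subgroup.center G)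
    (A : Type) [CommRing A] (W : Type) [AddCommGroup W] [Module A W]
    (σ : Representation A U W) (ψ : Z →* Aˣ)
    (hcompat : CharCompat U Z A W σ ψ)
    (I : Type) [Fintype I] (t : I → G)
    (hT : ∀ g : G, ∃! i : I, ∃ (γ : D) (u : U) (z : Z), g = ↑γ * t i * ↑u * ↑z) :
    Function.Injective (evalMap U Z A W σ ψ D t) ∧
    LinearMap.range (evalMap U Z A W σ ψ D t) =
      Submodule.pi Set.univ (fun i => Wfix U Z A W σ ψ D (t i)) := by
  classical
  have hc : ∀ (z : Z) (x : G), x * (z : G) = (z : G) * x := fun z x =>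
    Subgroup.mem_center_iff.mp (hZ z.2) x
  have happ : ∀ (u v : U) (x : W), σ u (σ v x) = σ (u * v) x := by
    intro u v x
    rw [map_mul]; rfl
  constructor
  · intro f f' hff
    have h : ∀ i, f.1 (t i) = f'.1 (t i) := fun i => congrFun hff i
    apply Subtype.ext
    funext g
    obtain ⟨i, ⟨γ, u, z, hg⟩, -⟩ := hT g
    have h1 := f.2 γ (t i) u z
    have h2 := f'.2 γ (t i) u z
    rw [hg, h1, h2, h i]
  · ext w
    simp only [LinearMap.mem_range, Submodule.mem_pi, Set.mem_univ, forall_true_left]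
    constructor
    · rintro ⟨f, rfl⟩ i
      intro u z hD
      set γ : D := ⟨_, hD⟩ with hγ
      have heq : (γ : G) * t i * (↑(u⁻¹) : G) * (↑(z⁻¹) : G) = t i := by
        show t i * ((u : G) * z) * (t i)⁻¹ * t i * (↑u)⁻¹ * (↑z)⁻¹ = t i
        rw [mul_assoc (t i * (↑u * ↑z)) _ (t i), inv_mul_cancel, mul_one]
        rw [mul_assoc (t i), mul_assoc (↑u : G), ← hc z (↑u)⁻¹]
        group
      have hone := f.2 γ (t i) u⁻¹ z⁻¹
      rw [heq] at hone
      rw [inv_inv] at hone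
      show σ u⁻¹ ((ψ z : A) • f.1 (t i)) = f.1 (t i)
      conv_lhs => rw [hone]
      rw [map_smul, map_smul, happ, inv_mul_cancel, map_one,
        Module.End.one_apply, smul_smul, map_inv]
      norm_cast
      simp
    · intro hw
      choose idx hdec huniq using hT
      choose γf uf zf hgf using hdec
      have huniq' : ∀ g i, (∃ (γ : D) (u : U) (z : Z), g = ↑γ * t i * ↑u * ↑z) →
          i = idx g := fun g i h => huniq g i h
      have key : ∀ (i : I) (γ γ' : D) (u u' : U) (z z' : Z),
          (γ : G) * t i * ↑u * ↑z = (γ' : G) * t i * ↑u' * ↑z' →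
          (ψ z : A) • σ u⁻¹ (w i) = (ψ z' : A) • σ u'⁻¹ (w i) := by
        intro i γ γ' u u' z z' h
        have hc' : ∀ x : G, x * ((↑z' : G) * (↑z)⁻¹) = ((↑z' : G) * (↑z)⁻¹) * x := by
          intro x
          have := hc (z' * z⁻¹) x
          push_cast at this
          exact this
        have h2 : (γ' : G)⁻¹ * ↑γ = t i * ↑u' * ↑z' * (↑z : G)⁻¹ * (↑u : G)⁻¹ * (t i)⁻¹ := by
          have h3 : (γ : G) = ((γ : G) * t i * ↑u * ↑z) * (↑z : G)⁻¹ * (↑u : G)⁻¹ * (t i)⁻¹ := by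
            group
          rw [h3, h]
          group
        have hD : t i * ((↑(u' * u⁻¹) : G) * (↑(z' * z⁻¹) : G)) * (t i)⁻¹ ∈ D := by
          have heq2 : t i * ((↑(u' * u⁻¹) : G) * (↑(z' * z⁻¹) : G)) * (t i)⁻¹
              = (γ' : G)⁻¹ * γ := by
            push_cast
            rw [h2, mul_assoc (↑u' : G) ((↑u : G))⁻¹ ((↑z' : G) * (↑z : G)⁻¹),
              hc' ((↑u : G))⁻¹]
            group
          rw [heq2]
          exact mul_mem (inv_mem γ'.2) γ.2
        have hfix := hw i (u' * u⁻¹) (z' * z⁻¹) hD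
        -- hfix : σ (u' * u⁻¹)⁻¹ ((ψ (z' * z⁻¹) : A) • w i) = w i
        calc (ψ z : A) • σ u⁻¹ (w i)
            = (ψ z : A) • σ u⁻¹ (σ (u' * u⁻¹)⁻¹ ((ψ (z' * z⁻¹) : A) • w i)) := by
              rw [hfix]
          _ = (ψ z' : A) • σ u'⁻¹ (w i) := by
              rw [happ, map_smul, smul_smul]
              congr 1
              · rw [map_mul, map_inv]
                push_cast
                rw [mul_comm ((ψ z' : A)) _, ← mul_assoc]
                norm_cast
                simp
              · congr 1
                group
      have hfeq : ∀ (g : G) (i : I) (γ : D) (u : U) (z : Z),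
          g = (γ : G) * t i * ↑u * ↑z →
          (ψ (zf g) : A) • σ (uf g)⁻¹ (w (idx g)) = (ψ z : A) • σ u⁻¹ (w i) := by
        intro g i γ u z hg
        have hi : i = idx g := huniq' g i ⟨γ, u, z, hg⟩
        subst hi
        exact key _ (γf g) γ (uf g) u (zf g) z ((hgf g).symm.trans hg)
      set f : G → W := fun g => (ψ (zf g) : A) • σ (uf g)⁻¹ (w (idx g)) with hfdef
      have hmem : f ∈ SMod U Z A W σ ψ D := by
        intro γ₁ g u₁ z₁
        have hdec1 : (γ₁ : G) * g * ↑u₁ * ↑z₁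
            = (↑(γ₁ * γf g) : G) * t (idx g) * ↑(uf g * u₁) * ↑(zf g * z₁) := by
          have hswap : (↑(zf g) : G) * ((↑u₁ : G) * ↑z₁) = ↑u₁ * ((↑(zf g) : G) * ↑z₁) := by
            rw [← mul_assoc, ← hc (zf g) (↑u₁ : G), mul_assoc]
          conv_lhs => rw [hgf g]
          push_cast
          simp only [mul_assoc]
          rw [hswap]
        have h1 := hfeq ((γ₁ : G) * g * ↑u₁ * ↑z₁) (idx g) (γ₁ * γf g) (uf g * u₁)
          (zf g * z₁) hdec1
        show f ((γ₁:G) * g * ↑u₁ * ↑z₁) = (ψ z₁ : A) • σ u₁⁻¹ (f g)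
        rw [hfdef]
        simp only []
        rw [h1]
        rw [map_smul, smul_smul, happ]
        congr 1
        · rw [map_mul]; push_cast; ring
        · congr 1; group
      refine ⟨⟨f, hmem⟩, ?_⟩
      funext i
      show f (t i) = w i
      have := hfeq (t i) i 1 1 1 (by simp)
      rw [hfdef]
      simp only []
      rw [this]
      simp


end SerreWeightsAux
end
end

section
/- Suppose G = ⊔_{i∈I} D t_i U Z is a finite disjoint union of double cosets, that ψ is trivial on D ∩ Z, and that for every t ∈ G one has UZ ∩ t^{-1} D t ⊆ Z (the trivial-stabilizer hypothesis). Then the map f ↦ (f(t_i))_{i∈I} is an isomorphism of A-modules from S_{σ,ψ} onto W^{⊕I}. In particular, if W is a finite free A-module then so is S_{σ,ψ}; and for every short exact sequence 0 → W₁ → W₂ → W₃ → 0 of A-modules with U-actions σ₁, σ₂, σ₃ each satisfying the compatibility σ_j(u) = ψ(u)^{-1}·id for u ∈ U ∩ Z, the induced sequence 0 → S_{σ₁,ψ} → S_{σ₂,ψ} → S_{σ₃,ψ} → 0 is exact. -/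
set_option maxHeartbeats 1000000
set_option synthInstance.maxHeartbeats 400000

noncomputable section

namespace SerreWeightsAux

variable {G : Type*} [Group G]

section Aux

variable {G : Type} [Group G] {D U Z : Subgroup G}
variable {A : Type} [CommRing A] {W : Type} [AddCommGroup W] [Module A W]
variable {σ : Representation A U W} {ψ : Z →* Aˣ}

/-- Key well-definedness lemma: two decompositions of the same element relative to the same
coset representative give the same evaluation recipe. -/
lemma keyWD (hZ : Z ≤ Subgroup.center G) (hcompat : CharCompat U Z A W σ ψ)
    (hψD : ∀ z : Z, (z : G) ∈ D → ψ z = 1)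
    (htriv : ∀ (x : G) (u : U) (z : Z), x⁻¹ * (↑u * ↑z) * x ∈ D → (↑u * ↑z : G) ∈ Z)
    (x : G) (γ γ' : D) (u u' : U) (z z' : Z)
    (heq : (↑γ * x * ↑u * ↑z : G) = ↑γ' * x * ↑u' * ↑z') (w : W) :
    ((ψ z : Aˣ) : A) • σ u⁻¹ w = ((ψ z' : Aˣ) : A) • σ u'⁻¹ w := by
  have e1 : (↑u' * (↑u)⁻¹ * (↑z' * (↑z)⁻¹) : G) = ↑u' * ↑z' * (↑z)⁻¹ * (↑u)⁻¹ := by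
    have h2 : (↑z' * (↑z)⁻¹ : G) ∈ Subgroup.center G :=
      mul_mem (hZ z'.2) (inv_mem (hZ z.2))
    have h3 := Subgroup.mem_center_iff.mp h2 ((↑u : G)⁻¹)
    rw [mul_assoc, h3]
    group
  have h3 : (↑γ' : G) * x * ↑u' * ↑z' * ((↑z)⁻¹ * (↑u)⁻¹ * x⁻¹) = ↑γ := by
    rw [← heq]; group
  have hδ : x * (↑u' * (↑u)⁻¹ * (↑z' * (↑z)⁻¹)) * x⁻¹ = (↑γ' : G)⁻¹ * ↑γ := by
    rw [e1, ← h3]; group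
  have hζZ : (↑(u' * u⁻¹) * ↑(z' * z⁻¹) : G) ∈ Z := by
    apply htriv x⁻¹ (u' * u⁻¹) (z' * z⁻¹)
    have : (x⁻¹)⁻¹ * (↑(u' * u⁻¹) * ↑(z' * z⁻¹)) * x⁻¹
        = x * (↑u' * (↑u)⁻¹ * (↑z' * (↑z)⁻¹)) * x⁻¹ := by
      push_cast; group
    rw [this, hδ]
    exact mul_mem (inv_mem γ'.2) γ.2
  have hζZ' : (↑u' * (↑u)⁻¹ * (↑z' * (↑z)⁻¹) : G) ∈ Z := by
    have : (↑u' * (↑u)⁻¹ * (↑z' * (↑z)⁻¹) : G) = ↑(u' * u⁻¹) * ↑(z' * z⁻¹) := by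
      push_cast; ring_nf
    rw [this]; exact hζZ
  have hζD : (↑u' * (↑u)⁻¹ * (↑z' * (↑z)⁻¹) : G) ∈ D := by
    have hc := Subgroup.mem_center_iff.mp (hZ hζZ') x
    have : (↑u' * (↑u)⁻¹ * (↑z' * (↑z)⁻¹) : G) = (↑γ' : G)⁻¹ * ↑γ := by
      rw [← hδ, hc]; group
    rw [this]; exact mul_mem (inv_mem γ'.2) γ.2
  have huZ : (↑u' * (↑u)⁻¹ : G) ∈ Z := by
    have h6 : (↑u' * (↑u)⁻¹ : G)
        = (↑u' * (↑u)⁻¹ * (↑z' * (↑z)⁻¹) : G) * ((↑z' * (↑z)⁻¹ : G))⁻¹ := by group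
    rw [h6]
    exact mul_mem hζZ' (inv_mem (mul_mem z'.2 (inv_mem z.2)))
  have huZ' : (↑(u * u'⁻¹) : G) ∈ Z := by
    have h7 : (↑(u * u'⁻¹) : G) = ((↑u' * (↑u)⁻¹ : G))⁻¹ := by push_cast; group
    rw [h7]; exact inv_mem huZ
  -- the element of Z given by u'u⁻¹
  have hzetaD : ((⟨↑u' * (↑u)⁻¹, huZ⟩ : Z) * (z' * z⁻¹) : Z) = ⟨_, hζZ'⟩ := by
    ext; push_cast; group
  have hψ1 : ψ ⟨↑u' * (↑u)⁻¹ * (↑z' * (↑z)⁻¹), hζZ'⟩ = 1 := hψD _ hζD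
  have hψrel : ψ ⟨↑u' * (↑u)⁻¹, huZ⟩ * ψ z' * (ψ z)⁻¹ = 1 := by
    rw [← map_inv, ← map_mul, ← map_mul, mul_assoc, hzetaD, hψ1]
  have hψinv : ψ ⟨↑(u * u'⁻¹), huZ'⟩ = (ψ ⟨↑u' * (↑u)⁻¹, huZ⟩)⁻¹ := by
    rw [← map_inv]
    congr 1
    ext; push_cast; group
  have hσ : σ u'⁻¹ w = ((ψ ⟨↑u' * (↑u)⁻¹, huZ⟩ : Aˣ) : A) • σ u⁻¹ w := by
    have h4 : u'⁻¹ = u⁻¹ * (u * u'⁻¹) := by group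
    rw [h4, map_mul, Module.End.mul_apply, hcompat (u * u'⁻¹) huZ', hψinv]
    simp [map_smul]
  rw [hσ, smul_smul]
  congr 1
  have := congrArg (fun a : Aˣ => ((a : Aˣ) : A)) hψrel
  simp only [Units.val_mul, Units.val_one] at this
  -- this : ψ⟨u'u⁻¹⟩ * ψ z' * (ψ z)⁻¹ = 1 in A
  have h5 : ((ψ z : Aˣ) : A) = ((ψ z' : Aˣ) : A) * ((ψ ⟨↑u' * (↑u)⁻¹, huZ⟩ : Aˣ) : A) := by
    have hz : (((ψ z)⁻¹ : Aˣ) : A) * ((ψ z : Aˣ) : A) = 1 := by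
      rw [← Units.val_mul, inv_mul_cancel, Units.val_one]
    calc ((ψ z : Aˣ) : A)
        = (((ψ ⟨↑u' * (↑u)⁻¹, huZ⟩ : Aˣ) : A) * ((ψ z' : Aˣ) : A) * (((ψ z)⁻¹ : Aˣ) : A))
            * ((ψ z : Aˣ) : A) := by rw [this]; ring
      _ = ((ψ z' : Aˣ) : A) * ((ψ ⟨↑u' * (↑u)⁻¹, huZ⟩ : Aˣ) : A)
            * ((((ψ z)⁻¹ : Aˣ) : A) * ((ψ z : Aˣ) : A)) := by ring
      _ = _ := by rw [hz, mul_one]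
  rw [h5]

/-- The evaluation map at coset representatives is bijective. -/
lemma evalBij (hZ : Z ≤ Subgroup.center G) (hcompat : CharCompat U Z A W σ ψ)
    {I : Type} (t : I → G)
    (hT : ∀ g : G, ∃! i : I, ∃ (γ : D) (u : U) (z : Z), g = ↑γ * t i * ↑u * ↑z)
    (hψD : ∀ z : Z, (z : G) ∈ D → ψ z = 1)
    (htriv : ∀ (x : G) (u : U) (z : Z), x⁻¹ * (↑u * ↑z) * x ∈ D → (↑u * ↑z : G) ∈ Z) :
    Function.Bijective (evalMap U Z A W σ ψ D t) := by
  constructor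
  · -- injectivity
    rw [injective_iff_map_eq_zero]
    intro f hf
    ext g
    obtain ⟨i, ⟨γ, u, z, hg⟩, -⟩ := hT g
    have h0 : (f : G → W) (t i) = 0 := congrFun hf i
    have := f.2 γ (t i) u z
    rw [← hg] at this
    show (f : G → W) g = 0
    rw [this, h0, map_zero, smul_zero]
  · -- surjectivity
    intro w
    classical
    -- define the candidate function
    set F : G → W := fun g =>
      ((ψ ((hT g).choose_spec.1.choose_spec.choose_spec.choose) : Aˣ) : A) •
        σ ((hT g).choose_spec.1.choose_spec.choose)⁻¹ (w (hT g).choose) with hF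
    have hFval : ∀ (g : G) (i : I) (γ : D) (u : U) (z : Z),
        g = ↑γ * t i * ↑u * ↑z → F g = ((ψ z : Aˣ) : A) • σ u⁻¹ (w i) := by
      intro g i γ u z hg
      have hi : i = (hT g).choose := (hT g).choose_spec.2 i ⟨γ, u, z, hg⟩
      subst hi
      have hspec := (hT g).choose_spec.1
      have heq : (↑γ * t ((hT g).choose) * ↑u * ↑z : G)
          = ↑(hspec.choose) * t ((hT g).choose) * ↑(hspec.choose_spec.choose) *
            ↑(hspec.choose_spec.choose_spec.choose) := by
        rw [← hg]
        exact hspec.choose_spec.choose_spec.choose_spec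
      rw [hF]
      exact (keyWD hZ hcompat hψD htriv _ _ _ _ _ _ _ heq (w (hT g).choose)).symm
    have hFmem : F ∈ SMod U Z A W σ ψ D := by
      intro γ g u z
      obtain ⟨γ₀, u₀, z₀, hg⟩ := (hT g).choose_spec.1
      set i₀ := (hT g).choose
      have hdec : (↑γ * g * ↑u * ↑z : G)
          = ↑(γ * γ₀) * t i₀ * ↑(u₀ * u) * ↑(z₀ * z) := by
        rw [hg]
        push_cast
        have hc := Subgroup.mem_center_iff.mp (hZ z₀.2) (↑u : G)
        -- goal: γ γ₀ t u₀ z₀ u z = γ γ₀ t (u₀ u) (z₀ z)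
        calc (↑γ * (↑γ₀ * t i₀ * ↑u₀ * ↑z₀) * ↑u * ↑z : G)
            = ↑γ * ↑γ₀ * t i₀ * ↑u₀ * (↑u * ↑z₀) * ↑z := by rw [hc]; group
          _ = ↑γ * ↑γ₀ * t i₀ * (↑u₀ * ↑u) * (↑z₀ * ↑z) := by group
      rw [hFval _ _ _ _ _ hdec, hFval _ _ _ _ _ hg]
      rw [map_mul, Units.val_mul, mul_inv_rev, map_mul, Module.End.mul_apply]
      rw [map_smul, smul_smul]
      congr 1
      ring
    refine ⟨⟨F, hFmem⟩, ?_⟩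
    funext i
    show F (t i) = w i
    have : t i = ↑(1 : D) * t i * ↑(1 : U) * ↑(1 : Z) := by simp
    rw [hFval _ _ _ _ _ this]
    simp

end Aux

/-- If `G = ⊔ᵢ D tᵢ U Z` is a finite disjoint union of double cosets, `ψ` is
trivial on `D ∩ Z`, and `UZ ∩ t⁻¹Dt ⊆ Z` for all `t` (trivial stabilizers), then
`f ↦ (f(tᵢ))ᵢ` is an isomorphism of `A`-modules from `S_{σ,ψ}` onto `W^{⊕I}`.  In particular
`S_{σ,ψ}` is finite free if `W` is, and `S_{-,ψ}` is exact on short exact sequences of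
`A`-modules with compatible `U`-actions. -/
theorem stmt10 (G : Type) [Group G] (D U Z : Subgroup G) (hZ : Z ≤ Subgroup.center G)
    (A : Type) [CommRing A] (W : Type) [AddCommGroup W] [Module A W]
    (σ : Representation A U W) (ψ : Z →* Aˣ)
    (hcompat : CharCompat U Z A W σ ψ)
    (I : Type) [Fintype I] (t : I → G)
    (hT : ∀ g : G, ∃! i : I, ∃ (γ : D) (u : U) (z : Z), g = ↑γ * t i * ↑u * ↑z)
    (hψD : ∀ z : Z, (z : G) ∈ D → ψ z = 1)
    (htriv : ∀ (x : G) (u : U) (z : Z), x⁻¹ * (↑u * ↑z) * x ∈ D → (↑u * ↑z : G) ∈ Z) :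
    (Function.Injective (evalMap U Z A W σ ψ D t) ∧
      LinearMap.range (evalMap U Z A W σ ψ D t) = ⊤) ∧
    (Module.Finite A W → Module.Free A W →
      Module.Finite A (SMod U Z A W σ ψ D) ∧ Module.Free A (SMod U Z A W σ ψ D)) ∧
    (∀ (W₁ W₂ W₃ : Type) [AddCommGroup W₁] [Module A W₁] [AddCommGroup W₂] [Module A W₂]
      [AddCommGroup W₃] [Module A W₃]
      (σ₁ : Representation A U W₁) (σ₂ : Representation A U W₂) (σ₃ : Representation A U W₃),
      CharCompat U Z A W₁ σ₁ ψ → CharCompat U Z A W₂ σ₂ ψ → CharCompat U Z A W₃ σ₃ ψ →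
      ∀ (φ₁ : W₁ →ₗ[A] W₂) (φ₂ : W₂ →ₗ[A] W₃)
        (hφ₁ : ∀ (u : U) (w : W₁), φ₁ (σ₁ u w) = σ₂ u (φ₁ w))
        (hφ₂ : ∀ (u : U) (w : W₂), φ₂ (σ₂ u w) = σ₃ u (φ₂ w)),
        Function.Injective φ₁ → LinearMap.range φ₁ = LinearMap.ker φ₂ →
        Function.Surjective φ₂ →
        Function.Injective (SMap U Z A ψ D σ₁ σ₂ φ₁ hφ₁) ∧
        LinearMap.range (SMap U Z A ψ D σ₁ σ₂ φ₁ hφ₁) =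
          LinearMap.ker (SMap U Z A ψ D σ₂ σ₃ φ₂ hφ₂) ∧
        Function.Surjective (SMap U Z A ψ D σ₂ σ₃ φ₂ hφ₂)) := by
  have hbij := evalBij hZ hcompat t hT hψD htriv
  refine ⟨⟨hbij.1, LinearMap.range_eq_top.mpr hbij.2⟩, ?_, ?_⟩
  · intro hfin hfree
    have e : SMod U Z A W σ ψ D ≃ₗ[A] (I → W) :=
      LinearEquiv.ofBijective (evalMap U Z A W σ ψ D t) hbij
    exact ⟨Module.Finite.equiv e.symm, Module.Free.of_equiv e.symm⟩
  · intro W₁ W₂ W₃ _ _ _ _ _ _ σ₁ σ₂ σ₃ hc₁ hc₂ hc₃ φ₁ φ₂ hφ₁ hφ₂ hinj hrk hsurj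
    have hbij₁ := evalBij (σ := σ₁) hZ hc₁ t hT hψD htriv
    have hbij₂ := evalBij (σ := σ₂) hZ hc₂ t hT hψD htriv
    have hbij₃ := evalBij (σ := σ₃) hZ hc₃ t hT hψD htriv
    classical
    refine ⟨?_, ?_, ?_⟩
    · -- injectivity of SMap φ₁
      intro f₁ f₁' h
      ext g
      exact hinj (congrFun (congrArg Subtype.val h) g)
    · -- range = ker
      ext f₂
      constructor
      · rintro ⟨f₁, rfl⟩
        show _ = 0
        ext g
        show φ₂ (φ₁ ((f₁ : G → W₁) g)) = 0
        have : φ₁ ((f₁ : G → W₁) g) ∈ LinearMap.ker φ₂ := hrk ▸ LinearMap.mem_range_self _ _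
        exact this
      · intro hf₂
        have hker : ∀ g : G, φ₂ ((f₂ : G → W₂) g) = 0 := by
          intro g
          have h0 : SMap U Z A ψ D σ₂ σ₃ φ₂ hφ₂ f₂ = 0 := hf₂
          exact congrFun (congrArg Subtype.val h0) g
        have hw : ∀ i : I, ∃ v : W₁, φ₁ v = (f₂ : G → W₂) (t i) := by
          intro i
          have : (f₂ : G → W₂) (t i) ∈ LinearMap.range φ₁ := by
            rw [hrk]; exact hker (t i)
          exact this
        choose v hv using hw
        obtain ⟨f₁, hf₁⟩ := hbij₁.2 v
        refine ⟨f₁, ?_⟩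
        apply hbij₂.1
        funext i
        show φ₁ ((f₁ : G → W₁) (t i)) = (f₂ : G → W₂) (t i)
        have hvi : (f₁ : G → W₁) (t i) = v i := congrFun hf₁ i
        rw [hvi]; exact hv i
    · -- surjectivity of SMap φ₂
      intro f₃
      have hw : ∀ i : I, ∃ v : W₂, φ₂ v = (f₃ : G → W₃) (t i) := fun i => hsurj _
      choose v hv using hw
      obtain ⟨f₂, hf₂⟩ := hbij₂.2 v
      refine ⟨f₂, ?_⟩
      apply hbij₃.1
      funext i
      show φ₂ ((f₂ : G → W₂) (t i)) = (f₃ : G → W₃) (t i)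
      have : (f₂ : G → W₂) (t i) = v i := congrFun hf₂ i
      rw [this]; exact hv i

end SerreWeightsAux
end
end

section
/- Let U' ≤ U be subgroups of G with Z ∩ U ⊆ U', and let W be an A-module with an action σ of U' satisfying σ(u) = ψ(u)^{-1}·id_W for u ∈ U' ∩ Z. Define Ind_{U'}^{U} W to be the A-module of functions θ : U → W with θ(u'u) = σ(u')θ(u) for all u' ∈ U', u ∈ U, with U acting by (u·θ)(x) = θ(xu). Then the map sending F ∈ S_{Ind_{U'}^{U} W, ψ} (formed with respect to the level subgroup U) to the function f : G → W, f(x) = F(x)(1), is an isomorphism of A-modules onto S_{σ,ψ} (formed with respect to the level subgroup U'), with inverse f ↦ F given by F(x)(g) = f(xg^{-1}). -/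
/-!
The equivariance `F (x u) = u⁻¹ • F x` for `u ∈ U` forces `F x u = F (x u⁻¹) 1`, so `F` is
recovered from `f = F (·) 1`. Conversely, for `f ∈ S_{σ,ψ}` the formula `F x u = f (x u⁻¹)`
lands in `Ind_{U'}^{U} W` by the `U'`-equivariance of `f`, and it has the `D`- and
`U`-equivariance of `S_{Ind W, ψ}` by construction; the `Z`-equivariance holds because `Z` is
central, so `z` commutes past `u⁻¹`.
-/

set_option maxHeartbeats 1000000
set_option synthInstance.maxHeartbeats 400000

noncomputable section

namespace SerreWeightsAux

variable {G : Type*} [Group G]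

lemma SMod.apply_mul {D V Z : Subgroup G} {A : Type*} [CommRing A] {M : Type*} [AddCommGroup M]
    [Module A M] {ρ : Representation A V M} {ψ : Z →* Aˣ} {f : G → M}
    (hf : f ∈ SMod V Z A M ρ ψ D) (g : G) (v : V) : f (g * v) = ρ v⁻¹ (f g) := by
  simpa using hf 1 g v 1

section Induction

variable {D U' U Z : Subgroup G} {hUU : U' ≤ U}
variable {A : Type*} [CommRing A] {W : Type*} [AddCommGroup W] [Module A W]
variable {σ : Representation A U' W} {ψ : Z →* Aˣ}

lemma indRep_apply_coe (u : U) (θ : IndMod U' U hUU A W σ) (v : U) :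
    ((indRep U' U hUU A W σ u θ : IndMod U' U hUU A W σ) : U → W) v = (θ : U → W) (v * u) :=
  rfl

@[simp]
lemma evInd_apply (F : G → IndMod U' U hUU A W σ) (x : G) :
    evInd U' U hUU A W σ F x = (F x : U → W) 1 :=
  rfl

lemma SMod.ind_apply_eq_evInd {F : G → IndMod U' U hUU A W σ}
    (hF : F ∈ SMod U Z A _ (indRep U' U hUU A W σ) ψ D) (x : G) (u : U) :
    (F x : U → W) u = evInd U' U hUU A W σ F (x * (u : G)⁻¹) := by
  have h := congrArg (fun θ : IndMod U' U hUU A W σ => (θ : U → W) u)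
    (SMod.apply_mul hF (x * (u : G)⁻¹) u)
  simpa [indRep_apply_coe] using h

lemma evInd_mem_SMod {F : G → IndMod U' U hUU A W σ}
    (hF : F ∈ SMod U Z A _ (indRep U' U hUU A W σ) ψ D) :
    evInd U' U hUU A W σ F ∈ SMod U' Z A W σ ψ D := by
  intro γ g u' z
  have h := congrArg (fun θ : IndMod U' U hUU A W σ => (θ : U → W) 1)
    (hF γ g (Subgroup.inclusion hUU u') z)
  have hσ := (F g).2 u'⁻¹ 1
  simp only [mul_one] at hσ
  simpa [indRep_apply_coe, ← hσ] using h

lemma evInd_injOn :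
    Set.InjOn (evInd U' U hUU A W σ) (SMod U Z A _ (indRep U' U hUU A W σ) ψ D) := by
  intro F₁ h₁ F₂ h₂ h
  funext x
  ext u
  rw [SMod.ind_apply_eq_evInd h₁, SMod.ind_apply_eq_evInd h₂, h]

def indLift (f : G → W) (x : G) : U → W := fun u => f (x * (u : G)⁻¹)

lemma indLift_mem_IndMod {f : G → W} (hf : f ∈ SMod U' Z A W σ ψ D) (x : G) :
    indLift f x ∈ IndMod U' U hUU A W σ := by
  intro u' u
  simpa [indLift, mul_assoc] using SMod.apply_mul hf (x * (u : G)⁻¹) u'⁻¹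

lemma indLift_mem_SMod (hZ : Z ≤ Subgroup.center G) {f : G → W}
    (hf : f ∈ SMod U' Z A W σ ψ D) :
    (fun x => (⟨indLift f x, indLift_mem_IndMod hf x⟩ : IndMod U' U hUU A W σ)) ∈
      SMod U Z A _ (indRep U' U hUU A W σ) ψ D := by
  intro γ g u z
  ext v
  have hzv : (γ : G) * g * u * z * (v : G)⁻¹ =
      γ * (g * u * (v : G)⁻¹) * ((1 : U') : G) * z := by
    rw [mul_assoc _ (z : G), (hZ z.2).comm]
    simp only [OneMemClass.coe_one, mul_one, mul_assoc]
  simp only [indLift, Submodule.coe_smul, Pi.smul_apply, indRep_apply_coe]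
  rw [hzv, hf]
  simp [mul_assoc]

end Induction

theorem stmt11_general (G : Type) [Group G] (D : Subgroup G) (U' U : Subgroup G) (hUU : U' ≤ U)
    (Z : Subgroup G) (hZ : Z ≤ Subgroup.center G)
    (A : Type) [CommRing A] (W : Type) [AddCommGroup W] [Module A W]
    (σ : Representation A U' W) (ψ : Z →* Aˣ) :
    (∀ F : G → (IndMod U' U hUU A W σ),
      F ∈ SMod U Z A (IndMod U' U hUU A W σ) (indRep U' U hUU A W σ) ψ D →
      evInd U' U hUU A W σ F ∈ SMod U' Z A W σ ψ D) ∧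
    (∀ F₁ F₂ : G → (IndMod U' U hUU A W σ),
      F₁ ∈ SMod U Z A (IndMod U' U hUU A W σ) (indRep U' U hUU A W σ) ψ D →
      F₂ ∈ SMod U Z A (IndMod U' U hUU A W σ) (indRep U' U hUU A W σ) ψ D →
      evInd U' U hUU A W σ F₁ = evInd U' U hUU A W σ F₂ → F₁ = F₂) ∧
    (∀ f ∈ SMod U' Z A W σ ψ D,
      ∃ F ∈ SMod U Z A (IndMod U' U hUU A W σ) (indRep U' U hUU A W σ) ψ D,
        evInd U' U hUU A W σ F = f ∧
        ∀ (x : G) (u : U), ((F x : ↥U → W) u) = f (x * (↑u)⁻¹)) := by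
  refine ⟨fun F hF => evInd_mem_SMod hF, fun _ _ h₁ h₂ h => evInd_injOn h₁ h₂ h,
    fun f hf => ⟨_, indLift_mem_SMod hZ hf, ?_, fun x u => rfl⟩⟩
  funext x
  simp [indLift]

/-- For `U' ≤ U` with `Z ∩ U ⊆ U'` and `W` a `U'`-module compatible with
`ψ`, the map `F ↦ (x ↦ F(x)(1))` is an isomorphism of `A`-modules from
`S_{Ind_{U'}^{U} W, ψ}` (formed with level `U`) onto `S_{σ,ψ}` (formed with level `U'`),
with inverse `f ↦ F` given by `F(x)(g) = f(xg⁻¹)`. -/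
theorem stmt11 (G : Type) [Group G] (D : Subgroup G) (U' U : Subgroup G) (hUU : U' ≤ U)
    (Z : Subgroup G) (hZ : Z ≤ Subgroup.center G)
    (hZU : ∀ g : G, g ∈ Z → g ∈ U → g ∈ U')
    (A : Type) [CommRing A] (W : Type) [AddCommGroup W] [Module A W]
    (σ : Representation A U' W) (ψ : Z →* Aˣ)
    (hcompat : CharCompat U' Z A W σ ψ) :
    (∀ F : G → (IndMod U' U hUU A W σ),
      F ∈ SMod U Z A (IndMod U' U hUU A W σ) (indRep U' U hUU A W σ) ψ D →
      evInd U' U hUU A W σ F ∈ SMod U' Z A W σ ψ D) ∧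
    (∀ F₁ F₂ : G → (IndMod U' U hUU A W σ),
      F₁ ∈ SMod U Z A (IndMod U' U hUU A W σ) (indRep U' U hUU A W σ) ψ D →
      F₂ ∈ SMod U Z A (IndMod U' U hUU A W σ) (indRep U' U hUU A W σ) ψ D →
      evInd U' U hUU A W σ F₁ = evInd U' U hUU A W σ F₂ → F₁ = F₂) ∧
    (∀ f ∈ SMod U' Z A W σ ψ D,
      ∃ F ∈ SMod U Z A (IndMod U' U hUU A W σ) (indRep U' U hUU A W σ) ψ D,
        evInd U' U hUU A W σ F = f ∧
        ∀ (x : G) (u : U), ((F x : ↥U → W) u) = f (x * (↑u)⁻¹)) :=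
  stmt11_general G D U' U hUU Z hZ A W σ ψ

end SerreWeightsAux
end
end

section
/- Suppose A is a field, W is a finite-dimensional A-vector space, W^∨ is its dual with the contragredient action σ^∨ of U (which is compatible with ψ^{-1} on U ∩ Z). Suppose G = ⊔_{i∈I} D t_i U Z is a finite disjoint union of double cosets, ψ is trivial on D ∩ Z, and UZ ∩ t^{-1} D t ⊆ Z for every t ∈ G. Then the pairing ⟨f₁, f₂⟩ := Σ_{i∈I} ⟨f₁(t_i), f₂(t_i)⟩, where the pairing on the right is the canonical pairing between W and W^∨, is a well-defined perfect A-bilinear pairing S_{σ,ψ} × S_{σ^∨,ψ^{-1}} → A, and it is independent of the choice of double coset representatives t_i. -/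
set_option maxHeartbeats 1000000
set_option synthInstance.maxHeartbeats 400000

noncomputable section

namespace SerreWeightsAux

variable {G : Type*} [Group G]

section Stmt12Aux

variable {G : Type} [Group G] {D U Z : Subgroup G}
variable {A : Type} [Field A] {W : Type} [AddCommGroup W] [Module A W]
variable {σ : Representation A U W} {ψ : Z →* Aˣ}

/-- Independence of the value `ψ(z) • σ(u)⁻¹ w` of the chosen decomposition of an element
of a double coset. -/
lemma key_indep (hZ : Z ≤ Subgroup.center G)
    (hcompat : CharCompat U Z A W σ ψ)
    (hψD : ∀ z : Z, (z : G) ∈ D → ψ z = 1)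
    (htriv : ∀ (x : G) (u : U) (z : Z), x⁻¹ * (↑u * ↑z) * x ∈ D → (↑u * ↑z : G) ∈ Z)
    (t : G) (γ γ' : D) (u u' : U) (z z' : Z)
    (h : (γ : G) * t * u * z = (γ' : G) * t * u' * z') (w : W) :
    (ψ z : A) • σ u⁻¹ w = (ψ z' : A) • σ u'⁻¹ w := by
  have hzc : ∀ (y : Z) (g : G), g * (y : G) = (y : G) * g :=
    fun y g => Subgroup.mem_center_iff.mp (hZ y.2) g
  have hc : ((z' : G) * (z : G)⁻¹) * (u : G)⁻¹ = (u : G)⁻¹ * ((z' : G) * (z : G)⁻¹) := by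
    have := hzc (z' * z⁻¹) ((u : G)⁻¹)
    push_cast at this
    rw [this]
  have h' : ((γ' : G))⁻¹ * ((γ : G) * t * u * z) = t * u' * z' := by
    rw [h]; group
  have h'' : ((γ' : G))⁻¹ * (γ : G)
      = t * (u' : G) * (z' : G) * (z : G)⁻¹ * (u : G)⁻¹ * t⁻¹ := by
    rw [show ((γ' : G))⁻¹ * (γ : G)
        = ((γ' : G))⁻¹ * ((γ : G) * t * u * z) * (z : G)⁻¹ * (u : G)⁻¹ * t⁻¹ by group, h']
  have heq : t * (((u' : G) * (u : G)⁻¹) * ((z' : G) * (z : G)⁻¹)) * t⁻¹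
      = ((γ'⁻¹ * γ : D) : G) := by
    push_cast
    rw [h'']
    rw [show (u' : G) * (u : G)⁻¹ * ((z' : G) * (z : G)⁻¹)
        = (u' : G) * ((u : G)⁻¹ * ((z' : G) * (z : G)⁻¹)) from mul_assoc _ _ _, ← hc]
    group
  -- apply htriv with x = t⁻¹
  have hZ0 : ((u' * u⁻¹ : U) : G) * ((z' * z⁻¹ : Z) : G) ∈ Z := by
    apply htriv t⁻¹ (u' * u⁻¹) (z' * z⁻¹)
    push_cast
    rw [inv_inv]
    rw [heq]
    exact (γ'⁻¹ * γ).2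
  have hZ0' : ((u' : G) * (u : G)⁻¹) * ((z' : G) * (z : G)⁻¹) ∈ Z := by
    have := hZ0; push_cast at this; exact this
  have huZ : ((u' * u⁻¹ : U) : G) ∈ Z := by
    have : ((u' * u⁻¹ : U) : G)
        = (((u' * u⁻¹ : U) : G) * ((z' * z⁻¹ : Z) : G)) * ((z' * z⁻¹ : Z) : G)⁻¹ := by group
    rw [this]
    exact Z.mul_mem hZ0 (Z.inv_mem (z' * z⁻¹).2)
  -- the element u₀ z₀ lies in D
  have hD0 : ((u' * u⁻¹ : U) : G) * ((z' * z⁻¹ : Z) : G) ∈ D := by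
    have hcen : t * (((u' : G) * (u : G)⁻¹) * ((z' : G) * (z : G)⁻¹)) * t⁻¹
        = ((u' : G) * (u : G)⁻¹) * ((z' : G) * (z : G)⁻¹) := by
      have h2 := Subgroup.mem_center_iff.mp (hZ hZ0') t
      rw [h2]; group
    have : ((u' : G) * (u : G)⁻¹) * ((z' : G) * (z : G)⁻¹) ∈ D := by
      rw [← hcen, heq]; exact (γ'⁻¹ * γ).2
    push_cast
    exact this
  -- hence ψ of it is 1
  have hψ1 : ψ ⟨_, hZ0⟩ = 1 := hψD ⟨_, hZ0⟩ hD0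
  have hsplit : (⟨_, hZ0⟩ : Z) = ⟨_, huZ⟩ * (z' * z⁻¹) := by
    apply Subtype.ext; rfl
  have hψu : ψ ⟨_, huZ⟩ = (ψ (z' * z⁻¹))⁻¹ := by
    rw [hsplit, map_mul] at hψ1
    exact eq_inv_of_mul_eq_one_left hψ1
  -- compute σ (u'⁻¹)
  have huZinv : (((u' * u⁻¹ : U)⁻¹ : U) : G) ∈ Z := by
    push_cast
    exact Z.inv_mem huZ
  have hσ : σ (u' * u⁻¹)⁻¹
      = (((ψ ⟨_, huZinv⟩)⁻¹ : Aˣ) : A) • LinearMap.id := hcompat _ huZinv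
  have hinvZ : (⟨_, huZinv⟩ : Z) = (⟨_, huZ⟩ : Z)⁻¹ := by
    apply Subtype.ext; push_cast; rfl
  have hu' : u'⁻¹ = u⁻¹ * (u' * u⁻¹)⁻¹ := by group
  rw [hu', map_mul]
  have hkey : σ u⁻¹ (σ (u' * u⁻¹)⁻¹ w) = (((ψ (z' * z⁻¹))⁻¹ : Aˣ) : A) • σ u⁻¹ w := by
    rw [hσ]
    simp only [LinearMap.smul_apply, LinearMap.id_apply, map_smul]
    congr 2
    rw [hinvZ, map_inv, inv_inv, hψu]
  rw [Module.End.mul_apply, hkey, smul_smul]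
  congr 1
  have h3 : ψ z' * (ψ (z' * z⁻¹))⁻¹ = ψ z := by
    rw [map_mul, map_inv, mul_inv, inv_inv, ← mul_assoc, mul_inv_cancel, one_mul]
  rw [← h3]
  push_cast
  ring

/-- The contragredient action is compatible with the inverse character. -/
lemma dual_charCompat (hcompat : CharCompat U Z A W σ ψ) :
    CharCompat U Z A (Module.Dual A W) σ.dual ψ⁻¹ := by
  intro u h
  have h' : ((u⁻¹ : U) : G) ∈ Z := by
    push_cast; exact Z.inv_mem h
  have hσ := hcompat u⁻¹ h'
  ext φ w
  show φ (σ u⁻¹ w) = _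
  rw [hσ]
  have hinv : (⟨((u⁻¹ : U) : G), h'⟩ : Z) = (⟨(u : G), h⟩ : Z)⁻¹ := by
    apply Subtype.ext; push_cast; rfl
  simp only [LinearMap.smul_apply, LinearMap.id_apply, map_smul, LinearMap.smul_apply,
    MonoidHom.inv_apply, inv_inv]
  rw [hinv, map_inv, inv_inv]

/-- Existence of an element of `S_{σ,ψ}` with a prescribed value at one double coset
representative and vanishing at the others. -/
lemma exists_ext (hZ : Z ≤ Subgroup.center G)
    (hcompat : CharCompat U Z A W σ ψ)
    (hψD : ∀ z : Z, (z : G) ∈ D → ψ z = 1)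
    (htriv : ∀ (x : G) (u : U) (z : Z), x⁻¹ * (↑u * ↑z) * x ∈ D → (↑u * ↑z : G) ∈ Z)
    {I : Type} (t : I → G)
    (hT : ∀ g : G, ∃! i : I, ∃ (γ : D) (u : U) (z : Z), g = ↑γ * t i * ↑u * ↑z)
    (i : I) (w : W) :
    ∃ f ∈ SMod U Z A W σ ψ D, f (t i) = w ∧ ∀ j : I, j ≠ i → f (t j) = 0 := by
  classical
  have hzc : ∀ (y : Z) (g : G), g * (y : G) = (y : G) * g :=
    fun y g => Subgroup.mem_center_iff.mp (hZ y.2) g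
  set P : G → Prop := fun g => ∃ (γ : D) (u : U) (z : Z), g = ↑γ * t i * ↑u * ↑z with hP
  set f : G → W := fun g =>
    if h : P g then
      (ψ h.choose_spec.choose_spec.choose : A) • σ h.choose_spec.choose⁻¹ w
    else 0 with hfdef
  have fspec : ∀ (γ : D) (u : U) (z : Z),
      f ((γ : G) * t i * u * z) = (ψ z : A) • σ u⁻¹ w := by
    intro γ u z
    have hg : P ((γ : G) * t i * u * z) := ⟨γ, u, z, rfl⟩
    show (if h : P ((γ : G) * t i * u * z) then _ else _) = _
    rw [dif_pos hg]
    exact key_indep hZ hcompat hψD htriv (t i) hg.choose γ hg.choose_spec.choose u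
      hg.choose_spec.choose_spec.choose z
      hg.choose_spec.choose_spec.choose_spec.symm w
  have fzero : ∀ g : G, ¬ P g → f g = 0 := by
    intro g hg
    show (if h : P g then _ else _) = 0
    rw [dif_neg hg]
  refine ⟨f, ?_, ?_, ?_⟩
  · intro γ₀ g u₀ z₀
    by_cases hg : P g
    · obtain ⟨γ, u, z, rfl⟩ := hg
      have hc : (z : G) * (u₀ : G) = (u₀ : G) * (z : G) := (hzc z (u₀ : G)).symm
      have hrw : (γ₀ : G) * ((γ : G) * t i * u * z) * u₀ * z₀
          = ((γ₀ * γ : D) : G) * t i * ((u * u₀ : U) : G) * ((z * z₀ : Z) : G) := by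
        push_cast
        calc (γ₀ : G) * ((γ : G) * t i * u * z) * u₀ * z₀
            = (γ₀ : G) * (γ : G) * t i * (u : G) * ((z : G) * (u₀ : G)) * z₀ := by group
          _ = (γ₀ : G) * (γ : G) * t i * (u : G) * ((u₀ : G) * (z : G)) * z₀ := by rw [hc]
          _ = (γ₀ : G) * (γ : G) * t i * ((u : G) * (u₀ : G)) * ((z : G) * (z₀ : G)) := by
              group
      rw [hrw, fspec, fspec]
      rw [map_mul ψ, mul_inv_rev, map_mul σ]
      simp only [Units.val_mul, Module.End.mul_apply, map_smul, mul_smul]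
      rw [smul_comm ((ψ z₀ : A)) ((ψ z : A))]
    · have hg' : ¬ P ((γ₀ : G) * g * u₀ * z₀) := by
        rintro ⟨γ, u, z, hh⟩
        apply hg
        refine ⟨γ₀⁻¹ * γ, u * u₀⁻¹, z * z₀⁻¹, ?_⟩
        have hc : ((z : G) * (z₀ : G)⁻¹) * (u₀ : G)⁻¹ = (u₀ : G)⁻¹ * ((z : G) * (z₀ : G)⁻¹) := by
          have := hzc (z * z₀⁻¹) ((u₀ : G)⁻¹)
          push_cast at this
          rw [this]
        have hg2 : g = (γ₀ : G)⁻¹ * ((γ : G) * t i * u * z) * (z₀ : G)⁻¹ * (u₀ : G)⁻¹ := by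
          rw [← hh]; group
        rw [hg2]
        push_cast
        rw [show (γ₀ : G)⁻¹ * ((γ : G) * t i * (u : G) * z) * (z₀ : G)⁻¹ * (u₀ : G)⁻¹
            = (γ₀ : G)⁻¹ * (γ : G) * t i * (u : G) * (((z : G) * (z₀ : G)⁻¹) * (u₀ : G)⁻¹)
            from by group, hc]
        group
      rw [fzero _ hg', fzero _ hg]
      simp
  · have := fspec 1 1 1
    simpa using this
  · intro j hj
    apply fzero
    rintro ⟨γ, u, z, hh⟩
    exact hj ((hT (t j)).unique (y₁ := j) (y₂ := i) ⟨(1 : D), (1 : U), (1 : Z), by simp⟩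
      ⟨γ, u, z, hh⟩)

end Stmt12Aux

/-- Under the hypotheses of Statement 10, with `A` a field and `W`
finite-dimensional, the pairing `⟨f₁,f₂⟩ = Σᵢ ⟨f₁(tᵢ), f₂(tᵢ)⟩` is a well-defined perfect
`A`-bilinear pairing `S_{σ,ψ} × S_{σ^∨,ψ⁻¹} → A`, independent of the choice of double coset
representatives. -/
theorem stmt12 (G : Type) [Group G] (D U Z : Subgroup G) (hZ : Z ≤ Subgroup.center G)
    (A : Type) [Field A] (W : Type) [AddCommGroup W] [Module A W] [FiniteDimensional A W]
    (σ : Representation A U W) (ψ : Z →* Aˣ)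
    (hcompat : CharCompat U Z A W σ ψ)
    (I : Type) [Fintype I] (t : I → G)
    (hT : ∀ g : G, ∃! i : I, ∃ (γ : D) (u : U) (z : Z), g = ↑γ * t i * ↑u * ↑z)
    (hψD : ∀ z : Z, (z : G) ∈ D → ψ z = 1)
    (htriv : ∀ (x : G) (u : U) (z : Z), x⁻¹ * (↑u * ↑z) * x ∈ D → (↑u * ↑z : G) ∈ Z) :
    (∀ f₁ ∈ SMod U Z A W σ ψ D,
      (∀ f₂ ∈ SMod U Z A (Module.Dual A W) σ.dual ψ⁻¹ D,
        ∑ i, f₂ (t i) (f₁ (t i)) = 0) → f₁ = 0) ∧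
    (∀ f₂ ∈ SMod U Z A (Module.Dual A W) σ.dual ψ⁻¹ D,
      (∀ f₁ ∈ SMod U Z A W σ ψ D,
        ∑ i, f₂ (t i) (f₁ (t i)) = 0) → f₂ = 0) ∧
    (∀ t' : I → G, (∀ i : I, ∃ (γ : D) (u : U) (z : Z), t' i = ↑γ * t i * ↑u * ↑z) →
      ∀ f₁ ∈ SMod U Z A W σ ψ D, ∀ f₂ ∈ SMod U Z A (Module.Dual A W) σ.dual ψ⁻¹ D,
        ∑ i, f₂ (t' i) (f₁ (t' i)) = ∑ i, f₂ (t i) (f₁ (t i))) := by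
  have hψD' : ∀ z : Z, (z : G) ∈ D → ψ⁻¹ z = 1 := by
    intro z hz
    rw [MonoidHom.inv_apply, hψD z hz, inv_one]
  have hdual := dual_charCompat hcompat
  refine ⟨?_, ?_, ?_⟩
  · intro f₁ hf₁ hpair
    have claim : ∀ i : I, f₁ (t i) = 0 := by
      intro i
      rw [← Module.forall_dual_apply_eq_zero_iff A (f₁ (t i))]
      intro φ
      obtain ⟨f₂, hmem, hi, hj⟩ := exists_ext hZ hdual hψD' htriv t hT i φ
      have hsum := hpair f₂ hmem
      rwa [Finset.sum_eq_single i
        (fun j _ hji => by rw [hj j hji]; simp)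
        (fun hni => absurd (Finset.mem_univ i) hni), hi] at hsum
    funext g
    obtain ⟨i, ⟨γ, u, z, rfl⟩, -⟩ := hT g
    rw [mem_SMod_iff] at hf₁
    rw [hf₁ γ (t i) u z, claim i]
    simp
  · intro f₂ hf₂ hpair
    have claim : ∀ i : I, f₂ (t i) = 0 := by
      intro i
      ext w
      obtain ⟨f₁, hmem, hi, hj⟩ := exists_ext hZ hcompat hψD htriv t hT i w
      have hsum := hpair f₁ hmem
      rw [Finset.sum_eq_single i
        (fun j _ hji => by rw [hj j hji]; simp)
        (fun hni => absurd (Finset.mem_univ i) hni), hi] at hsum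
      simpa using hsum
    funext g
    obtain ⟨i, ⟨γ, u, z, rfl⟩, -⟩ := hT g
    rw [mem_SMod_iff] at hf₂
    rw [hf₂ γ (t i) u z, claim i]
    simp
  · intro t' ht' f₁ hf₁ f₂ hf₂
    apply Finset.sum_congr rfl
    intro i _
    obtain ⟨γ, u, z, hi⟩ := ht' i
    rw [mem_SMod_iff] at hf₁ hf₂
    rw [hi, hf₁ γ (t i) u z, hf₂ γ (t i) u z]
    simp only [MonoidHom.inv_apply, LinearMap.smul_apply]
    have hdu : (σ.dual u⁻¹) (f₂ (t i)) ((ψ z : A) • σ u⁻¹ (f₁ (t i)))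
        = (ψ z : A) • f₂ (t i) (f₁ (t i)) := by
      show (f₂ (t i)) (σ u⁻¹⁻¹ ((ψ z : A) • σ u⁻¹ (f₁ (t i)))) = _
      rw [inv_inv, map_smul, map_smul]
      congr 1
      rw [← Module.End.mul_apply, ← map_mul, mul_inv_cancel, map_one, Module.End.one_apply]
    rw [hdu, smul_smul]
    simp

end SerreWeightsAux
end
end
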